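/- arXiv:2104.10817 — 4 statements merged into one kernel-verified Lean document; each statement's English description precedes it below -/
import Mathlib

section
/- Let a, b be rational numbers with a⁸·b³·(a − 27b) ≠ 0. Then the point (0, 0) on the elliptic curve y² + a·xy + a²b·y = x³ over ℚ has order exactly 3 in the group of rational points. -/
/-!
When `a₂ = a₄ = 0` and `a₃ ≠ 0`, the tangent at the origin `P = (0, 0)` is the line `y = 0`, which
meets `y² + a₁xy + a₃y = x³` only at `P`. So `P` is a flex: `2P = -P`, hence `3P = 0`, and `P ≠ 0`.
-/

namespace WeierstrassCurve.Affine

variable {F : Type*} [Field F] [DecidableEq F] {W : WeierstrassCurve.Affine F}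

lemma slope_zero_of_a₄_eq_zero (ha₄ : W.a₄ = 0) (ha₃ : W.a₃ ≠ 0) : W.slope 0 0 0 0 = 0 := by
  rw [slope_of_Y_ne rfl (by simpa [negY, eq_comm] using ha₃)]
  simp [ha₄]

lemma Point.some_zero_zero_add_self (ha₂ : W.a₂ = 0) (ha₄ : W.a₄ = 0) (ha₃ : W.a₃ ≠ 0)
    (h : W.Nonsingular 0 0) : Point.some 0 0 h + Point.some 0 0 h = -Point.some 0 0 h := by
  rw [Point.add_self_of_Y_ne' (by simpa [negY, eq_comm] using ha₃), neg_inj, Point.some.injEq]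
  simp [addX, negAddY, slope_zero_of_a₄_eq_zero ha₄ ha₃, ha₂]

lemma Point.addOrderOf_some_zero_zero (ha₂ : W.a₂ = 0) (ha₄ : W.a₄ = 0) (ha₃ : W.a₃ ≠ 0)
    (h : W.Nonsingular 0 0) : addOrderOf (Point.some 0 0 h) = 3 := by
  have : Fact (Nat.Prime 3) := ⟨Nat.prime_three⟩
  refine addOrderOf_eq_prime ?_ (Point.some_ne_zero h)
  rw [succ_nsmul, two_nsmul, some_zero_zero_add_self ha₂ ha₄ ha₃, neg_add_cancel]

end WeierstrassCurve.Affine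

theorem stmt_8 (a b : ℚ) (hΔ : a ^ 8 * b ^ 3 * (a - 27 * b) ≠ 0)
    (h : (⟨a, 0, a ^ 2 * b, 0, 0⟩ : WeierstrassCurve ℚ).toAffine.Nonsingular 0 0) :
    addOrderOf (WeierstrassCurve.Affine.Point.some _ _ h) = 3 := by
  have ha₃ : a ^ 2 * b ≠ 0 := by
    intro h0
    apply hΔ
    linear_combination a ^ 6 * b ^ 2 * (a - 27 * b) * h0
  exact WeierstrassCurve.Affine.Point.addOrderOf_some_zero_zero rfl rfl ha₃ h
end

section
/- Let a, b be rational numbers with a⁷·b⁴·(a + 16b) ≠ 0. Then the point (0, 0) on the elliptic curve y² + a·xy − a²b·y = x³ − ab·x² over ℚ has order exactly 4 in the group of rational points. -/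
/-!
The tangent to the curve at `P = (0, 0)` is horizontal, so it meets the curve again at
`(a b, 0)` and `2 P = (a b, 0)`. The tangent at `(a b, 0)` is vertical, so `2 P` is a point of
order `2` and `P` has order `4`.
-/

open WeierstrassCurve.Affine

namespace WeierstrassCurve

variable {F : Type*} [Field F] {a b : F}

/-- Tate normal form `E_{C4}(a, b)`. -/
abbrev tateC4 (a b : F) : WeierstrassCurve F := ⟨a, -(a * b), -(a ^ 2 * b), 0, 0⟩

lemma tateC4_negY_zero_zero : (tateC4 a b).toAffine.negY 0 0 = a ^ 2 * b := by
  simp [negY]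

lemma tateC4_nonsingular_mul_zero (ha : a ≠ 0) (hb : b ≠ 0) :
    (tateC4 a b).toAffine.Nonsingular (a * b) 0 := by
  rw [nonsingular_iff, equation_iff]
  refine ⟨by ring, Or.inl ?_⟩
  have hab : (a * b) ^ 2 ≠ 0 := pow_ne_zero 2 (mul_ne_zero ha hb)
  contrapose! hab
  linear_combination -hab

variable [DecidableEq F]

lemma tateC4_two_smul_zero_zero (ha : a ≠ 0) (hb : b ≠ 0)
    (h : (tateC4 a b).toAffine.Nonsingular 0 0) :
    2 • Point.some 0 0 h = Point.some (a * b) 0 (tateC4_nonsingular_mul_zero ha hb) := by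
  have hy : (0 : F) ≠ (tateC4 a b).toAffine.negY 0 0 := by
    rw [tateC4_negY_zero_zero]
    exact (mul_ne_zero (pow_ne_zero 2 ha) hb).symm
  have hslope : (tateC4 a b).toAffine.slope 0 0 0 0 = 0 := by
    rw [slope_of_Y_ne rfl hy]
    simp
  rw [two_smul, Point.add_self_of_Y_ne hy, Point.some.injEq, hslope]
  constructor
  · simp [addX]
  · simp only [addY, negAddY, negY, addX]
    ring

lemma tateC4_two_smul_mul_zero (h : (tateC4 a b).toAffine.Nonsingular (a * b) 0) :
    2 • Point.some (a * b) 0 h = 0 := by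
  rw [two_smul]
  exact Point.add_self_of_Y_eq (by simp only [negY]; ring)

theorem tateC4_addOrderOf_zero_zero (ha : a ≠ 0) (hb : b ≠ 0)
    (h : (tateC4 a b).toAffine.Nonsingular 0 0) :
    addOrderOf (Point.some 0 0 h) = 4 := by
  have h2 := tateC4_two_smul_zero_zero ha hb h
  refine addOrderOf_eq_prime_pow (p := 2) (n := 1) ?_ ?_
  · rw [pow_one, h2]
    exact Point.some_ne_zero _
  · rw [pow_succ, pow_one, mul_smul, h2, tateC4_two_smul_mul_zero]

end WeierstrassCurve

theorem stmt_9 (a b : ℚ) (hΔ : a ^ 7 * b ^ 4 * (a + 16 * b) ≠ 0)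
    (h : (⟨a, -(a * b), -(a ^ 2 * b), 0, 0⟩ :
      WeierstrassCurve ℚ).toAffine.Nonsingular 0 0) :
    addOrderOf (WeierstrassCurve.Affine.Point.some 0 0 h) = 4 := by
  have ha : a ≠ 0 := fun ha => hΔ (by rw [ha]; ring)
  have hb : b ≠ 0 := fun hb => hΔ (by rw [hb]; ring)
  exact WeierstrassCurve.tateC4_addOrderOf_zero_zero ha hb h
end

section
/- Let a, b be rational numbers with a⁵·b⁵·(b² − 11ab − a²) ≠ 0. Then the point (0, 0) on the elliptic curve y² + (a−b)·xy − a²b·y = x³ − ab·x² over ℚ has order exactly 5 in the group of rational points. -/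
/-!
Doubling `P = (0, 0)` along its tangent (slope `0`) gives `2P = (ab, ab²)`, and doubling `2P`
along its tangent (slope `b`) gives `(0, a²b) = -P`. Hence `5P = 0`, and since `P ≠ 0` and `5` is
prime, `P` has order `5`. The tangents are non-vertical exactly because `a²b ≠ 0` and `ab² ≠ 0`.
-/

open WeierstrassCurve.Affine WeierstrassCurve.Affine.Point

namespace WeierstrassCurve.Affine.Point

variable {F : Type*} [Field F] [DecidableEq F] {W : WeierstrassCurve.Affine F}

lemma two_nsmul_some_of_slope_eq {x y ℓ x' y' : F} (h : W.Nonsingular x y)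
    (hy : y ≠ W.negY x y) (hℓ : W.slope x x y y = ℓ) (hx' : W.addX x x ℓ = x')
    (hy' : W.addY x x y ℓ = y') :
    ∃ h' : W.Nonsingular x' y', 2 • some x y h = some x' y' h' := by
  subst hℓ hx' hy'
  exact ⟨_, by rw [two_nsmul, add_self_of_Y_ne hy]⟩

end WeierstrassCurve.Affine.Point

section CurveC5

variable {F : Type*} [Field F] [DecidableEq F] {a b : F}

variable (a b) in
abbrev curveC5 : WeierstrassCurve.Affine F :=
  (⟨a - b, -(a * b), -(a ^ 2 * b), 0, 0⟩ : WeierstrassCurve F).toAffine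

lemma curveC5_two_nsmul_origin (ha : a ≠ 0) (hb : b ≠ 0) (h : (curveC5 a b).Nonsingular 0 0) :
    ∃ h₂ : (curveC5 a b).Nonsingular (a * b) (a * b ^ 2),
      2 • some 0 0 h = some (a * b) (a * b ^ 2) h₂ := by
  have hneg : (curveC5 a b).negY 0 0 = a ^ 2 * b := by
    simp only [negY]
    ring
  have hy : (0 : F) ≠ (curveC5 a b).negY 0 0 := by
    rw [hneg]
    exact (mul_ne_zero (pow_ne_zero 2 ha) hb).symm
  have hℓ : (curveC5 a b).slope 0 0 0 0 = 0 := by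
    rw [slope_of_Y_ne rfl hy]
    simp
  refine two_nsmul_some_of_slope_eq h hy hℓ ?_ ?_
  · simp
  · simp only [addY, negAddY, addX, negY]
    ring

lemma curveC5_two_nsmul_ab (ha : a ≠ 0) (hb : b ≠ 0) (h : (curveC5 a b).Nonsingular 0 0)
    (h₂ : (curveC5 a b).Nonsingular (a * b) (a * b ^ 2)) :
    2 • some (a * b) (a * b ^ 2) h₂ = -some 0 0 h := by
  have hneg : (curveC5 a b).negY (a * b) (a * b ^ 2) = 0 := by
    simp only [negY]
    ring
  have hy : a * b ^ 2 ≠ (curveC5 a b).negY (a * b) (a * b ^ 2) := by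
    rw [hneg]
    exact mul_ne_zero ha (pow_ne_zero 2 hb)
  have hℓ : (curveC5 a b).slope (a * b) (a * b) (a * b ^ 2) (a * b ^ 2) = b := by
    rw [slope_of_Y_ne rfl hy, hneg, sub_zero, div_eq_iff (by rwa [hneg] at hy)]
    ring
  obtain ⟨h₄, e⟩ := two_nsmul_some_of_slope_eq h₂ hy hℓ
    (x' := 0) (y' := (curveC5 a b).negY 0 0) (by simp only [addX]; ring)
    (by simp only [addY, negAddY, addX, negY]; ring)
  rw [e, neg_some]

lemma curveC5_five_nsmul_origin (ha : a ≠ 0) (hb : b ≠ 0) (h : (curveC5 a b).Nonsingular 0 0) :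
    5 • some 0 0 h = 0 := by
  obtain ⟨h₂, e₂⟩ := curveC5_two_nsmul_origin ha hb h
  calc 5 • some 0 0 h = 2 • (2 • some 0 0 h) + some 0 0 h := by
        rw [smul_smul, ← succ_nsmul]; norm_num
    _ = 0 := by rw [e₂, curveC5_two_nsmul_ab ha hb h h₂, neg_add_cancel]

lemma addOrderOf_curveC5_origin (ha : a ≠ 0) (hb : b ≠ 0) (h : (curveC5 a b).Nonsingular 0 0) :
    addOrderOf (some 0 0 h) = 5 :=
  haveI : Fact (Nat.Prime 5) := ⟨by norm_num⟩
  addOrderOf_eq_prime (curveC5_five_nsmul_origin ha hb h) (some_ne_zero h)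

end CurveC5

theorem stmt_10 (a b : ℚ) (hΔ : a ^ 5 * b ^ 5 * (b ^ 2 - 11 * a * b - a ^ 2) ≠ 0)
    (h : (⟨a - b, -(a * b), -(a ^ 2 * b), 0, 0⟩ :
      WeierstrassCurve ℚ).toAffine.Nonsingular 0 0) :
    addOrderOf (WeierstrassCurve.Affine.Point.some _ _ h) = 5 := by
  have ha : a ≠ 0 := by rintro rfl; simp at hΔ
  have hb : b ≠ 0 := by rintro rfl; simp at hΔ
  exact addOrderOf_curveC5_origin ha hb h
end

section
/- For all real numbers x, let P(x) = x⁴ − 12x³ + 14x² + 12x + 1 and Q(x) = −(1 − 6x + x²)³ − 36·x·(1 − x)·(1 − 6x + x²) − 216·x². Then |x·(1 + 11x − x²)|³ ≤ max{|P(x)|³, Q(x)²}. -/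
theorem stmt_13 (x : ℝ) :
    |x * (1 + 11 * x - x ^ 2)| ^ 3 ≤
      max (|x ^ 4 - 12 * x ^ 3 + 14 * x ^ 2 + 12 * x + 1| ^ 3)
        ((-(1 - 6 * x + x ^ 2) ^ 3 - 36 * x * (1 - x) * (1 - 6 * x + x ^ 2) -
          216 * x ^ 2) ^ 2) := by
  by_cases hPd : |x * (1 + 11 * x - x ^ 2)| ≤ |x ^ 4 - 12 * x ^ 3 + 14 * x ^ 2 + 12 * x + 1|
  · exact le_max_of_le_left (pow_le_pow_left₀ (abs_nonneg _) hPd 3)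
  · push_neg at hPd
    have hsq : (x ^ 4 - 12 * x ^ 3 + 14 * x ^ 2 + 12 * x + 1) ^ 2 <
        (x * (1 + 11 * x - x ^ 2)) ^ 2 := by
      have h2 := pow_lt_pow_left₀ hPd (abs_nonneg _) (by norm_num : 2 ≠ 0)
      rwa [sq_abs, sq_abs] at h2
    have hd0 : 0 ≤ x * (1 + 11 * x - x ^ 2) := by
      by_contra hneg
      push_neg at hneg
      have h : x * (1 + 11 * x - x ^ 2) ≤ 0 := le_of_lt hneg
      have hA : (x * (1 + 11 * x - x ^ 2)) ^ 2 ≤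
          (x ^ 4 - 12 * x ^ 3 + 14 * x ^ 2 + 12 * x + 1) ^ 2 := by
        nlinarith [sq_nonneg (x^2-6*x+1), sq_nonneg (x^2-11*x-1), sq_nonneg (x^2+1),
          sq_nonneg x, sq_nonneg (x^3-12*x^2+14*x+12),
          mul_nonneg (neg_nonneg.2 h) (neg_nonneg.2 h),
          sq_nonneg (x^4-12*x^3+14*x^2+12*x+1), sq_nonneg (x*(x^2-11*x-1)),
          sq_nonneg (x^2-x-1)]
      linarith
    have hB : (1 + 11 * x - x ^ 2) ^ 2 ≤ 864 * x ^ 2 := by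
      nlinarith [sq_nonneg (x^2-6*x+1), sq_nonneg (x^2-11*x-1), sq_nonneg (x^2+1),
        sq_nonneg x, sq_nonneg (x^2-x-1), sq_nonneg (x^2-12*x-1), sq_nonneg (x^2+x-1),
        sq_nonneg ((x^2-6*x+1)*(x^2-12*x+1))]
    have habs : |x * (1 + 11 * x - x ^ 2)| = x * (1 + 11 * x - x ^ 2) := abs_of_nonneg hd0
    rw [habs] at hPd ⊢
    refine le_max_of_le_right ?_
    have hPgt : -(x * (1 + 11 * x - x ^ 2)) < x ^ 4 - 12 * x ^ 3 + 14 * x ^ 2 + 12 * x + 1 := by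
      have := neg_abs_le (x ^ 4 - 12 * x ^ 3 + 14 * x ^ 2 + 12 * x + 1)
      linarith
    have hQ : (-(1 - 6 * x + x ^ 2) ^ 3 - 36 * x * (1 - x) * (1 - 6 * x + x ^ 2) -
          216 * x ^ 2) ^ 2 =
        (x ^ 4 - 12 * x ^ 3 + 14 * x ^ 2 + 12 * x + 1) ^ 3 +
          1728 * x ^ 4 * (x * (1 + 11 * x - x ^ 2)) := by ring
    rw [hQ]
    have hB2 : (x * (1 + 11 * x - x ^ 2)) ^ 2 ≤ 864 * x ^ 4 := by
      nlinarith [mul_le_mul_of_nonneg_left hB (sq_nonneg x)]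
    have hcube : 2 * (x * (1 + 11 * x - x ^ 2)) ^ 3 ≤
        1728 * x ^ 4 * (x * (1 + 11 * x - x ^ 2)) := by
      nlinarith [mul_nonneg hd0 (sub_nonneg.2 hB2)]
    have hsum : 0 ≤ (x ^ 4 - 12 * x ^ 3 + 14 * x ^ 2 + 12 * x + 1) ^ 3 +
        (x * (1 + 11 * x - x ^ 2)) ^ 3 := by
      have h1 : (0:ℝ) < (x ^ 4 - 12 * x ^ 3 + 14 * x ^ 2 + 12 * x + 1) +
          x * (1 + 11 * x - x ^ 2) := by linarith
      have h2 : (0:ℝ) ≤ (x ^ 4 - 12 * x ^ 3 + 14 * x ^ 2 + 12 * x + 1) ^ 2 -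
          (x ^ 4 - 12 * x ^ 3 + 14 * x ^ 2 + 12 * x + 1) * (x * (1 + 11 * x - x ^ 2)) +
          (x * (1 + 11 * x - x ^ 2)) ^ 2 := by
        nlinarith [sq_nonneg (2 * (x ^ 4 - 12 * x ^ 3 + 14 * x ^ 2 + 12 * x + 1) -
          x * (1 + 11 * x - x ^ 2)), sq_nonneg (x * (1 + 11 * x - x ^ 2))]
      nlinarith [mul_nonneg h1.le h2]
    linarith
end
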